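/- arXiv:1307.5413 — 2 statements merged into one kernel-verified Lean document; each statement's English description precedes it below -/
import Mathlib

section
/- For every integer n ≥ 4, the dihedral group D₂ₙ of order 2n (with presentation ⟨a, b | aⁿ = 1, b² = 1, b⁻¹ab = a⁻¹⟩) is not a Cayley integral group. -/
open scoped Classical

/-- The adjacency matrix of the undirected Cayley graph `Cay(G,S)`:
the `(a,b)` entry is `1` if `a * b⁻¹ ∈ S` and `0` otherwise. -/
noncomputable def cayleyAdjMatrix {G : Type*} [Group G] [Fintype G] (S : Set G) :
    Matrix G G ℝ :=
  Matrix.of fun a b => if a * b⁻¹ ∈ S then (1 : ℝ) else 0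

/-- A finite group `G` is *Cayley integral* if for every subset `S ⊆ G` with `1 ∉ S` and
`S = S⁻¹`, every eigenvalue of the adjacency matrix of the Cayley graph `Cay(G,S)`
is an integer. -/
def IsCayleyIntegral (G : Type*) [Group G] [Fintype G] : Prop :=
  ∀ S : Set G, (1 : G) ∉ S → (∀ s ∈ S, s⁻¹ ∈ S) →
    ∀ μ ∈ spectrum ℝ (cayleyAdjMatrix S), ∃ k : ℤ, μ = (k : ℝ)

/-!
With `S = {sr 0, sr 1}` the Cayley graph of `DihedralGroup n` is the `2n`-cycle
`r 0 — sr 1 — r 1 — sr 2 — ⋯`. Putting `z ^ k` on its `k`-th vertex, `z = exp (π I / n)`, gives an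
eigenvector for `z + z⁻¹ = 2 cos (π / n)`, and for `n ≥ 4` this eigenvalue lies strictly between
`1` and `2`.
-/

open Complex DihedralGroup Matrix

theorem Matrix.mem_spectrum_of_mulVec_eq_smul {ι R : Type*} [Fintype ι] [DecidableEq ι] [CommRing R]
    {A : Matrix ι ι R} {v : ι → R} {μ : R} (hv : v ≠ 0) (hAv : A *ᵥ v = μ • v) :
    μ ∈ spectrum R A := by
  rw [← Matrix.spectrum_toLin']
  exact (Module.End.hasEigenvalue_of_hasEigenvector
    ⟨Module.End.mem_eigenspace_iff.2 (by rwa [Matrix.toLin'_apply]), hv⟩).mem_spectrum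

theorem cayleyAdjMatrix_mulVec_apply {G : Type*} [Group G] [Fintype G] (T : Finset G)
    (v : G → ℝ) (a : G) :
    (cayleyAdjMatrix (T : Set G) *ᵥ v) a = ∑ s ∈ T, v (s⁻¹ * a) := by
  rw [Matrix.mulVec, dotProduct,
    ← (Equiv.inv G).trans (Equiv.mulRight a) |>.sum_comp]
  simp [cayleyAdjMatrix, Finset.sum_ite_mem]

theorem two_mul_cos_pi_div_ne_intCast {n : ℕ} (hn : 4 ≤ n) (k : ℤ) :
    2 * Real.cos (Real.pi / n) ≠ k := by
  have hpos : 0 < Real.pi / n := by positivity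
  have hlt : Real.pi / n < Real.pi / 3 :=
    div_lt_div_of_pos_left Real.pi_pos (by norm_num) (by exact_mod_cast hn)
  have one_lt : 1 < 2 * Real.cos (Real.pi / n) := by
    have := Real.cos_lt_cos_of_nonneg_of_le_pi hpos.le (by linarith [Real.pi_pos]) hlt
    rw [Real.cos_pi_div_three] at this
    linarith
  have lt_two : 2 * Real.cos (Real.pi / n) < 2 := by
    have := Real.cos_lt_cos_of_nonneg_of_le_pi le_rfl (by linarith [Real.pi_pos]) hpos
    rw [Real.cos_zero] at this
    linarith
  intro hk
  rw [hk] at one_lt lt_two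
  norm_cast at one_lt lt_two
  omega

namespace DihedralGroup

variable {n : ℕ}

/-- `wave ψ z` takes the value `z ^ k` at the `k`-th vertex of the cycle when `ψ i = z ^ (2 * i)`. -/
noncomputable def wave (ψ : AddChar (ZMod n) ℂ) (z : ℂ) : DihedralGroup n → ℂ
  | r i => ψ i
  | sr i => ψ i * z⁻¹

theorem wave_sr_zero_mul_add_wave_sr_one_mul {ψ : AddChar (ZMod n) ℂ} {z : ℂ}
    (hz : ψ 1 = z ^ 2) (hz₀ : z ≠ 0) (g : DihedralGroup n) :
    wave ψ z (sr 0 * g) + wave ψ z (sr 1 * g) = (z + z⁻¹) * wave ψ z g := by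
  cases g with
  | r i =>
    simp only [wave, sr_mul_r, zero_add, AddChar.map_add_eq_mul, hz]
    field_simp
    ring
  | sr i =>
    have : ψ i = ψ (i - 1) * z ^ 2 := by rw [← hz, ← AddChar.map_add_eq_mul, sub_add_cancel]
    simp only [wave, sr_mul_sr, sub_zero, this]
    field_simp

theorem two_mul_cos_pi_div_mem_spectrum [NeZero n] (hn : 1 < n) :
    2 * Real.cos (Real.pi / n) ∈
      spectrum ℝ (cayleyAdjMatrix ({sr 0, sr 1} : Set (DihedralGroup n))) := by
  set z := exp (↑(Real.pi / n) * I)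
  have hz : ZMod.stdAddChar (1 : ZMod n) = z ^ 2 := by
    rw [← Int.cast_one, ZMod.stdAddChar_coe, ← exp_nat_mul]
    congr 1
    push_cast
    ring
  have hμ : z + z⁻¹ = ↑(2 * Real.cos (Real.pi / n)) := by
    rw [← exp_neg, ← neg_mul, Complex.ofReal_mul, Complex.ofReal_ofNat, Complex.ofReal_cos, two_cos]
  have hsr : (sr 0 : DihedralGroup n) ≠ sr 1 := by
    have : Fact (1 < n) := ⟨hn⟩
    simp
  refine mem_spectrum_of_mulVec_eq_smul (v := fun g => (wave ZMod.stdAddChar z g).re) ?_ ?_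
  · intro h
    simpa [wave] using congrFun h (r 0)
  · ext g
    have := wave_sr_zero_mul_add_wave_sr_one_mul hz (exp_ne_zero _) g
    rw [← Finset.coe_pair, cayleyAdjMatrix_mulVec_apply, Finset.sum_pair hsr]
    simp only [inv_sr, Pi.smul_apply, smul_eq_mul, ← Complex.add_re, this, hμ, re_ofReal_mul]

end DihedralGroup

/-- For `n ≥ 4`, the dihedral group of order `2n` is not Cayley integral. -/
theorem dihedral_not_cayley_integral (n : ℕ) (hn : 4 ≤ n) :
    letI : NeZero n := ⟨by omega⟩
    ¬ IsCayleyIntegral (DihedralGroup n) := by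
  have : NeZero n := ⟨by omega⟩
  intro h
  obtain ⟨k, hk⟩ := h {sr 0, sr 1} (by simp [one_def, -r_zero]) (by simp [inv_sr]) _
    (by convert two_mul_cos_pi_div_mem_spectrum (n := n) (by omega))
  exact two_mul_cos_pi_div_ne_intCast hn k hk
end

section
/- The alternating group A₄ of degree 4 is not a Cayley integral group. -/
/-!
Take `S = {x, x⁻¹, y, z}` with `x = (1 2 3)` and `y = (0 1)(2 3)`, `z = (0 2)(1 3)`. There are
integer functions `p, q` on `A₄` with `2 A p = 17 q - p` and `2 A q = p - q` for the adjacency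
matrix `A` of `Cay(A₄, S)`, so `A` preserves their span and acts on it by a matrix with
characteristic polynomial `X² + X - 4`. Hence `p + √17 q` is an eigenvector of `A` with the
irrational eigenvalue `(-1 + √17) / 2`.
-/

open scoped Classical

open scoped Matrix

-- No `[DecidableEq n]` binder: the spectrum is taken for the classical instance, as in
-- `IsCayleyIntegral`; a synthesized instance would not unify with it.
theorem Matrix.mem_spectrum_of_mulVec_eq_smul_s7 {n : Type*} [Fintype n]
    {A : Matrix n n ℝ} {μ : ℝ} {w : n → ℝ} (hw : w ≠ 0) (h : A *ᵥ w = μ • w) :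
    μ ∈ spectrum ℝ A := by
  rw [← Matrix.spectrum_toLin']
  exact (Module.End.hasEigenvalue_of_hasEigenvector
    ⟨Module.End.mem_eigenspace_iff.mpr h, hw⟩).mem_spectrum

theorem Matrix.mulVec_add_sqrt_smul {n : Type*} [Fintype n] {A : Matrix n n ℝ}
    {p q : n → ℝ} {a b d : ℝ} (hd : 0 ≤ d)
    (hp : A *ᵥ p = a • p + (b * d) • q) (hq : A *ᵥ q = b • p + a • q) :
    A *ᵥ (p + √d • q) = (a + b * √d) • (p + √d • q) := by
  have hsq : √d * √d = d := Real.mul_self_sqrt hd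
  rw [Matrix.mulVec_add, Matrix.mulVec_smul, hp, hq]
  ext i
  simp only [Pi.add_apply, Pi.smul_apply, smul_eq_mul]
  linear_combination -(b * q i) * hsq

theorem cayleyAdjMatrix_mulVec {G : Type*} [Group G] [Fintype G] (S : Finset G) (f : G → ℝ)
    (a : G) : (cayleyAdjMatrix (S : Set G) *ᵥ f) a = ∑ s ∈ S, f (s⁻¹ * a) := by
  let e : G ≃ G := (Equiv.inv G).trans (Equiv.mulLeft a)
  simp only [Matrix.mulVec, dotProduct, cayleyAdjMatrix, Matrix.of_apply, Finset.mem_coe]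
  rw [Fintype.sum_equiv e _ (fun s => (if s ∈ S then 1 else 0) * f (s⁻¹ * a)) (by simp [e])]
  simp [Finset.sum_ite_mem]

namespace AlternatingGroupFour

abbrev A4 := alternatingGroup (Fin 4)

def x : A4 := ⟨c[1, 2, 3], Equiv.Perm.mem_alternatingGroup.mpr (by decide)⟩
def y : A4 := ⟨c[0, 1] * c[2, 3], Equiv.Perm.mem_alternatingGroup.mpr (by decide)⟩
def z : A4 := ⟨c[0, 2] * c[1, 3], Equiv.Perm.mem_alternatingGroup.mpr (by decide)⟩

def S : Finset A4 := {x, x⁻¹, y, z}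

theorem one_notMem_S : (1 : A4) ∉ (S : Set A4) := by
  rw [Finset.mem_coe]; decide

theorem inv_mem_S : ∀ s ∈ (S : Set A4), s⁻¹ ∈ (S : Set A4) := by
  simp only [Finset.mem_coe]; decide

-- `A₄` acts simply transitively on ordered pairs of distinct points, so every function on `A₄`
-- is a function of `(a 0, a 1)`.
def p (a : A4) : ℤ := !![0, -4, -4, 2; 3, 0, -5, 1; 3, -5, 0, 1; 8, 0, 0, 0] (a.1 0) (a.1 1)
def q (a : A4) : ℤ := !![0, 0, 0, -2; 1, 0, 1, -1; 1, 1, 0, -1; 0, 0, 0, 0] (a.1 0) (a.1 1)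

set_option maxHeartbeats 400000 in
theorem two_mul_sum_p : ∀ a : A4, 2 * ∑ s ∈ S, p (s⁻¹ * a) = 17 * q a - p a := by decide

set_option maxHeartbeats 400000 in
theorem two_mul_sum_q : ∀ a : A4, 2 * ∑ s ∈ S, q (s⁻¹ * a) = p a - q a := by decide

theorem cayleyAdjMatrix_mulVec_p :
    cayleyAdjMatrix (S : Set A4) *ᵥ (fun a => (p a : ℝ)) =
      (-1 / 2 : ℝ) • (fun a => (p a : ℝ)) + (1 / 2 * 17 : ℝ) • (fun a => (q a : ℝ)) := by
  ext a
  have h := congrArg (Int.cast : ℤ → ℝ) (two_mul_sum_p a)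
  push_cast at h
  simp only [cayleyAdjMatrix_mulVec, Pi.add_apply, Pi.smul_apply, smul_eq_mul]
  linarith

theorem cayleyAdjMatrix_mulVec_q :
    cayleyAdjMatrix (S : Set A4) *ᵥ (fun a => (q a : ℝ)) =
      (1 / 2 : ℝ) • (fun a => (p a : ℝ)) + (-1 / 2 : ℝ) • (fun a => (q a : ℝ)) := by
  ext a
  have h := congrArg (Int.cast : ℤ → ℝ) (two_mul_sum_q a)
  push_cast at h
  simp only [cayleyAdjMatrix_mulVec, Pi.add_apply, Pi.smul_apply, smul_eq_mul]
  linarith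

theorem eigenvector_ne_zero : (fun a => (p a : ℝ)) + √17 • (fun a => (q a : ℝ)) ≠ 0 := by
  intro h
  have h1 := congrFun h 1
  have hp : p 1 = -4 := by decide
  have hq : q 1 = 0 := by decide
  simp [hp, hq] at h1

theorem irrational_eigenvalue : Irrational (-1 / 2 + 1 / 2 * √17) := by
  have h : Irrational (√17) := by norm_num
  simpa using (h.ratCast_mul (q := 1 / 2) (by norm_num)).ratCast_add (-1 / 2)

end AlternatingGroupFour

open AlternatingGroupFour in
/-- The alternating group `A₄` of degree 4 is not Cayley integral. -/
theorem a4_not_cayley_integral : ¬ IsCayleyIntegral (alternatingGroup (Fin 4)) := by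
  intro h
  have hmem := Matrix.mem_spectrum_of_mulVec_eq_smul_s7 eigenvector_ne_zero
    (Matrix.mulVec_add_sqrt_smul (by norm_num) cayleyAdjMatrix_mulVec_p cayleyAdjMatrix_mulVec_q)
  obtain ⟨k, hk⟩ := h S one_notMem_S inv_mem_S _ hmem
  exact irrational_eigenvalue.ne_int k hk
end
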